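/- arXiv:1005.4138 — 8 statements merged into one kernel-verified Lean document; each statement's English description precedes it below -/
import Mathlib

section
/- Let a < b and c < d be real numbers, Δ = [a,b] × [c,d], and let f : Δ → ℝ be coordinated convex on Δ and integrable on Δ. Then f((a+b)/2, (c+d)/2) ≤ (1/((b-a)(d-c))) ∫_a^b ∫_c^d f(x,y) dy dx ≤ (f(a,c) + f(a,d) + f(b,c) + f(b,d))/4. -/
/-!
The integral `G x = ∫ y in c..d, f x y` is convex in `x`, as an integral of the convex sections
`fun x => f x y`. Both inequalities then follow from the one-variable Hermite–Hadamard inequality,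
applied to `G` on `[a, b]` and to the sections `f x` on `[c, d]` at `x = (a + b) / 2` (left
inequality) and at `x = a, b` (right inequality). The one-variable inequalities come from
averaging `g y` with its reflection `g (c + d - y)`, which has the same integral and satisfies
`2 g ((c + d) / 2) ≤ g y + g (c + d - y) ≤ g c + g d`.
-/

open MeasureTheory Set

def CoordinatedConvexOn (I J : Set ℝ) (f : ℝ → ℝ → ℝ) : Prop :=
  ∀ t ∈ Icc (0:ℝ) 1, ∀ s ∈ Icc (0:ℝ) 1, ∀ x ∈ I, ∀ y ∈ I, ∀ u ∈ J, ∀ w ∈ J,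
    f (t * x + (1 - t) * y) (s * u + (1 - s) * w) ≤
      t * s * f x u + s * (1 - t) * f y u + t * (1 - s) * f x w + (1 - t) * (1 - s) * f y w

namespace CoordinatedConvexOn

variable {I J : Set ℝ} {f : ℝ → ℝ → ℝ}

theorem convexOn_fst (hf : CoordinatedConvexOn I J f) (hI : Convex ℝ I) {y : ℝ} (hy : y ∈ J) :
    ConvexOn ℝ I (fun x => f x y) := by
  refine ⟨hI, fun x hx x' hx' p q hp hq hpq => ?_⟩
  obtain rfl : q = 1 - p := by linarith
  simpa using hf p ⟨hp, by linarith⟩ 1 ⟨zero_le_one, le_rfl⟩ x hx x' hx' y hy y hy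

theorem convexOn_snd (hf : CoordinatedConvexOn I J f) (hJ : Convex ℝ J) {x : ℝ} (hx : x ∈ I) :
    ConvexOn ℝ J (f x) := by
  refine ⟨hJ, fun u hu u' hu' p q hp hq hpq => ?_⟩
  obtain rfl : q = 1 - p := by linarith
  simpa using hf 1 ⟨zero_le_one, le_rfl⟩ p ⟨hp, by linarith⟩ x hx x hx u hu u' hu'

end CoordinatedConvexOn

theorem convexOn_integral {E α : Type*} [AddCommGroup E] [Module ℝ E] [MeasurableSpace α]
    {μ : Measure α} {s : Set E} {f : E → α → ℝ} (hs : Convex ℝ s)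
    (hf : ∀ᵐ y ∂μ, ConvexOn ℝ s (fun x => f x y)) (hint : ∀ x ∈ s, Integrable (f x) μ) :
    ConvexOn ℝ s (fun x => ∫ y, f x y ∂μ) := by
  refine ⟨hs, fun x hx x' hx' p q hp hq hpq => ?_⟩
  simp only [smul_eq_mul]
  rw [← integral_const_mul, ← integral_const_mul,
    ← integral_add ((hint x hx).const_mul p) ((hint x' hx').const_mul q)]
  exact integral_mono_ae (hint _ (hs hx hx' hp hq hpq))
    (((hint x hx).const_mul p).add ((hint x' hx').const_mul q))
    (hf.mono fun y hy => hy.2 hx hx' hp hq hpq)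

theorem convexOn_intervalIntegral {E : Type*} [AddCommGroup E] [Module ℝ E] {s : Set E}
    {f : E → ℝ → ℝ} {c d : ℝ} (hcd : c ≤ d) (hs : Convex ℝ s)
    (hf : ∀ y ∈ Icc c d, ConvexOn ℝ s (fun x => f x y))
    (hint : ∀ x ∈ s, IntervalIntegrable (f x) volume c d) :
    ConvexOn ℝ s (fun x => ∫ y in c..d, f x y) := by
  simp only [intervalIntegral.integral_of_le hcd]
  exact convexOn_integral hs
    (ae_restrict_of_forall_mem measurableSet_Ioc fun y hy => hf y (Ioc_subset_Icc_self hy))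
    fun x hx => (hint x hx).1

theorem add_sub_mem_Icc {c d y : ℝ} (hy : y ∈ Icc c d) : c + d - y ∈ Icc c d :=
  ⟨by linarith [hy.2], by linarith [hy.1]⟩

theorem IntervalIntegrable.comp_reflect {g : ℝ → ℝ} {c d : ℝ}
    (hg : IntervalIntegrable g volume c d) :
    IntervalIntegrable (fun y => g (c + d - y)) volume c d := by
  simpa using (hg.comp_sub_left (c + d)).symm

theorem intervalIntegral.integral_add_comp_reflect {g : ℝ → ℝ} {c d : ℝ}
    (hg : IntervalIntegrable g volume c d) :
    ∫ y in c..d, (g y + g (c + d - y)) = 2 * ∫ y in c..d, g y := by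
  rw [integral_add hg hg.comp_reflect, integral_comp_sub_left]
  simp only [add_sub_cancel_right, add_sub_cancel_left]
  ring

namespace ConvexOn

variable {g : ℝ → ℝ} {c d : ℝ}

theorem map_add_div_two_le {s : Set ℝ} (hg : ConvexOn ℝ s g) {x y : ℝ} (hx : x ∈ s)
    (hy : y ∈ s) : g ((x + y) / 2) ≤ (g x + g y) / 2 := by
  have h := hg.2 hx hy (by norm_num : (0:ℝ) ≤ 1 / 2) (by norm_num : (0:ℝ) ≤ 1 / 2) (by norm_num)
  simp only [smul_eq_mul] at h
  rw [show (x + y) / 2 = 1 / 2 * x + 1 / 2 * y by ring]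
  linarith

theorem two_mul_map_midpoint_le (hg : ConvexOn ℝ (Icc c d) g) {y : ℝ} (hy : y ∈ Icc c d) :
    2 * g ((c + d) / 2) ≤ g y + g (c + d - y) := by
  have h := hg.map_add_div_two_le hy (add_sub_mem_Icc hy)
  rw [add_sub_cancel] at h
  linarith

theorem map_add_map_reflect_le (hg : ConvexOn ℝ (Icc c d) g) {y : ℝ} (hy : y ∈ Icc c d) :
    g y + g (c + d - y) ≤ g c + g d := by
  obtain ⟨p, q, hp, hq, hpq, rfl⟩ : y ∈ segment ℝ c d := by
    rwa [segment_eq_Icc (hy.1.trans hy.2)]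
  have hc : c ∈ Icc c d := left_mem_Icc.2 (hy.1.trans hy.2)
  have hd : d ∈ Icc c d := right_mem_Icc.2 (hy.1.trans hy.2)
  have hrefl : c + d - (p • c + q • d) = q • c + p • d := by
    simp only [smul_eq_mul]; linear_combination (-(c + d)) * hpq
  have h₁ := hg.2 hc hd hp hq hpq
  have h₂ := hg.2 hc hd hq hp (by linarith)
  simp only [smul_eq_mul] at h₁ h₂ hrefl ⊢
  rw [hrefl]
  linear_combination h₁ + h₂ + (g c + g d) * hpq

theorem integrableOn_Icc (hg : ConvexOn ℝ (Icc c d) g) : IntegrableOn g (Icc c d) := by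
  rw [integrableOn_Icc_iff_integrableOn_Ioo]
  refine integrable_of_le_of_le (g₁ := fun _ => 2 * g ((c + d) / 2) - max (g c) (g d))
    (g₂ := fun _ => max (g c) (g d)) ?_ ?_ ?_ (integrable_const _) (integrable_const _)
  · refine ContinuousOn.aestronglyMeasurable ?_ measurableSet_Ioo
    simpa using hg.continuousOn_interior
  all_goals
    refine ae_restrict_of_forall_mem measurableSet_Ioo fun y hy => ?_
    have hy := Ioo_subset_Icc_self hy
    have hcd : c ≤ d := hy.1.trans hy.2
    have hmax {z : ℝ} (hz : z ∈ Icc c d) : g z ≤ max (g c) (g d) :=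
      hg.le_max_of_mem_Icc (left_mem_Icc.2 hcd) (right_mem_Icc.2 hcd) hz
  · linarith [hg.two_mul_map_midpoint_le hy, hmax (add_sub_mem_Icc hy)]
  · exact hmax hy

theorem intervalIntegrable (hg : ConvexOn ℝ (Icc c d) g) (hcd : c ≤ d) :
    IntervalIntegrable g volume c d :=
  (intervalIntegrable_iff_integrableOn_Icc_of_le hcd).2 hg.integrableOn_Icc

theorem mul_map_midpoint_le_integral (hg : ConvexOn ℝ (Icc c d) g) (hcd : c ≤ d) :
    (d - c) * g ((c + d) / 2) ≤ ∫ y in c..d, g y := by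
  have hint := hg.intervalIntegrable hcd
  have h := calc
    2 * ((d - c) * g ((c + d) / 2)) = ∫ _ in c..d, 2 * g ((c + d) / 2) := by
      rw [intervalIntegral.integral_const, smul_eq_mul]; ring
    _ ≤ ∫ y in c..d, (g y + g (c + d - y)) :=
      intervalIntegral.integral_mono_on hcd intervalIntegrable_const
        (hint.add hint.comp_reflect) fun y hy => hg.two_mul_map_midpoint_le hy
    _ = 2 * ∫ y in c..d, g y := intervalIntegral.integral_add_comp_reflect hint
  linarith

theorem integral_le_mul_add_div_two (hg : ConvexOn ℝ (Icc c d) g) (hcd : c ≤ d) :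
    ∫ y in c..d, g y ≤ (d - c) * ((g c + g d) / 2) := by
  have hint := hg.intervalIntegrable hcd
  have h := calc
    2 * ∫ y in c..d, g y = ∫ y in c..d, (g y + g (c + d - y)) :=
      (intervalIntegral.integral_add_comp_reflect hint).symm
    _ ≤ ∫ _ in c..d, (g c + g d) :=
      intervalIntegral.integral_mono_on hcd (hint.add hint.comp_reflect) intervalIntegrable_const
        fun y hy => hg.map_add_map_reflect_le hy
    _ = 2 * ((d - c) * ((g c + g d) / 2)) := by
      rw [intervalIntegral.integral_const, smul_eq_mul]; ring
  linarith

end ConvexOn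

theorem hadamard_coordinated_convex_general
    (a b c d : ℝ) (hab : a < b) (hcd : c < d) (f : ℝ → ℝ → ℝ)
    (hconv : ∀ t ∈ Icc (0:ℝ) 1, ∀ s ∈ Icc (0:ℝ) 1,
      ∀ x ∈ Icc a b, ∀ y ∈ Icc a b, ∀ u ∈ Icc c d, ∀ w ∈ Icc c d,
        f (t * x + (1 - t) * y) (s * u + (1 - s) * w) ≤
          t * s * f x u + s * (1 - t) * f y u + t * (1 - s) * f x w
            + (1 - t) * (1 - s) * f y w) :
    f ((a + b) / 2) ((c + d) / 2) ≤
        (1 / ((b - a) * (d - c))) * ∫ x in a..b, ∫ y in c..d, f x y ∧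
      (1 / ((b - a) * (d - c))) * ∫ x in a..b, ∫ y in c..d, f x y ≤
        (f a c + f a d + f b c + f b d) / 4 := by
  have hf : CoordinatedConvexOn (Icc a b) (Icc c d) f := hconv
  have hsnd {x} (hx : x ∈ Icc a b) := hf.convexOn_snd (convex_Icc c d) hx
  have hG : ConvexOn ℝ (Icc a b) (fun x => ∫ y in c..d, f x y) :=
    convexOn_intervalIntegral hcd.le (convex_Icc a b)
      (fun y hy => hf.convexOn_fst (convex_Icc a b) hy)
      fun x hx => (hsnd hx).intervalIntegrable hcd.le
  have hba : 0 < b - a := sub_pos.2 hab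
  have hdc : 0 < d - c := sub_pos.2 hcd
  rw [one_div_mul_eq_div, le_div_iff₀ (by positivity), div_le_iff₀ (by positivity)]
  constructor
  · have hm : (a + b) / 2 ∈ Icc a b := ⟨by linarith, by linarith⟩
    have hmid := (hsnd hm).mul_map_midpoint_le_integral hcd.le
    calc f ((a + b) / 2) ((c + d) / 2) * ((b - a) * (d - c))
        = (b - a) * ((d - c) * f ((a + b) / 2) ((c + d) / 2)) := by ring
      _ ≤ (b - a) * ∫ y in c..d, f ((a + b) / 2) y := by gcongr
      _ ≤ ∫ x in a..b, ∫ y in c..d, f x y := hG.mul_map_midpoint_le_integral hab.le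
  · have ha := (hsnd (left_mem_Icc.2 hab.le)).integral_le_mul_add_div_two hcd.le
    have hb := (hsnd (right_mem_Icc.2 hab.le)).integral_le_mul_add_div_two hcd.le
    calc ∫ x in a..b, ∫ y in c..d, f x y
        ≤ (b - a) * (((∫ y in c..d, f a y) + ∫ y in c..d, f b y) / 2) :=
          hG.integral_le_mul_add_div_two hab.le
      _ ≤ (b - a) * (((d - c) * ((f a c + f a d) / 2) + (d - c) * ((f b c + f b d) / 2)) / 2) := by
          gcongr
      _ = (f a c + f a d + f b c + f b d) / 4 * ((b - a) * (d - c)) := by ring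

/-- **Hermite–Hadamard inequality for coordinated convex functions** (Theorem 3,
inequality (2.1)): if `f` is coordinated convex and integrable on
`[a,b] × [c,d]`, then
`f((a+b)/2, (c+d)/2) ≤ (1/((b-a)(d-c))) ∫∫ f ≤ (f(a,c)+f(a,d)+f(b,c)+f(b,d))/4`. -/
theorem hadamard_coordinated_convex
    (a b c d : ℝ) (hab : a < b) (hcd : c < d) (f : ℝ → ℝ → ℝ)
    (hconv : ∀ t ∈ Icc (0:ℝ) 1, ∀ s ∈ Icc (0:ℝ) 1,
      ∀ x ∈ Icc a b, ∀ y ∈ Icc a b, ∀ u ∈ Icc c d, ∀ w ∈ Icc c d,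
        f (t * x + (1 - t) * y) (s * u + (1 - s) * w) ≤
          t * s * f x u + s * (1 - t) * f y u + t * (1 - s) * f x w
            + (1 - t) * (1 - s) * f y w)
    (hint : IntegrableOn (fun p : ℝ × ℝ => f p.1 p.2) (Icc a b ×ˢ Icc c d)) :
    f ((a + b) / 2) ((c + d) / 2) ≤
        (1 / ((b - a) * (d - c))) * ∫ x in a..b, ∫ y in c..d, f x y ∧
      (1 / ((b - a) * (d - c))) * ∫ x in a..b, ∫ y in c..d, f x y ≤
        (f a c + f a d + f b c + f b d) / 4 :=
  hadamard_coordinated_convex_general a b c d hab hcd f hconv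
end

section
/- Let a < b and c < d be real numbers, Δ = [a,b] × [c,d], and let f : Δ → ℝ be coordinated convex on Δ and integrable on Δ. Then (1/((b-a)(d-c))) ∫_a^b ∫_c^d f(x,y) dy dx ≤ (f(a,c) + f(a,d) + f(b,c) + f(b,d))/4. -/
open MeasureTheory Set intervalIntegral

lemma hh_linear_integral (u v α β : ℝ) :
    ∫ y in u..v, ((v - y) * α + (y - u) * β) = (α + β) * (v - u) ^ 2 / 2 := by
  have h : (fun y : ℝ => (v - y) * α + (y - u) * β)
      = fun y : ℝ => (v * α - u * β) + (β - α) * y := funext fun y => by ring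
  rw [h, intervalIntegral.integral_add intervalIntegrable_const
      (intervalIntegrable_id.const_mul _),
    intervalIntegral.integral_const, intervalIntegral.integral_const_mul,
    integral_id, smul_eq_mul]
  ring

/-- Right Hermite–Hadamard inequality for coordinated convex functions:
`(1/((b-a)(d-c))) ∫_a^b ∫_c^d f(x,y) dy dx ≤ (f(a,c)+f(a,d)+f(b,c)+f(b,d))/4`. -/
theorem hadamard_coordinated_convex_right
    (a b c d : ℝ) (hab : a < b) (hcd : c < d) (f : ℝ → ℝ → ℝ)
    (hconv : ∀ t ∈ Icc (0:ℝ) 1, ∀ s ∈ Icc (0:ℝ) 1,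
      ∀ x ∈ Icc a b, ∀ y ∈ Icc a b, ∀ u ∈ Icc c d, ∀ w ∈ Icc c d,
        f (t * x + (1 - t) * y) (s * u + (1 - s) * w) ≤
          t * s * f x u + s * (1 - t) * f y u + t * (1 - s) * f x w
            + (1 - t) * (1 - s) * f y w)
    (hint : IntegrableOn (fun p : ℝ × ℝ => f p.1 p.2) (Icc a b ×ˢ Icc c d)) :
    (1 / ((b - a) * (d - c))) * ∫ x in a..b, ∫ y in c..d, f x y ≤
      (f a c + f a d + f b c + f b d) / 4 := by
  have hba : (0:ℝ) < b - a := sub_pos.mpr hab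
  have hdc : (0:ℝ) < d - c := sub_pos.mpr hcd
  set K : ℝ := (b - a) * (d - c) with hK
  have hKpos : 0 < K := mul_pos hba hdc
  set g : ℝ → ℝ → ℝ := fun x y =>
    ((b - x) * (d - y) * f a c + (x - a) * (d - y) * f b c
      + (b - x) * (y - c) * f a d + (x - a) * (y - c) * f b d) / K with hg
  -- pointwise bound
  have hpt : ∀ p ∈ Icc a b ×ˢ Icc c d, f p.1 p.2 ≤ g p.1 p.2 := by
    rintro ⟨x, y⟩ ⟨hx, hy⟩
    simp only [mem_Icc] at hx hy
    have ht : (b - x) / (b - a) ∈ Icc (0:ℝ) 1 := by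
      constructor
      · exact div_nonneg (by linarith) hba.le
      · rw [div_le_one hba]; linarith
    have hs : (d - y) / (d - c) ∈ Icc (0:ℝ) 1 := by
      constructor
      · exact div_nonneg (by linarith) hdc.le
      · rw [div_le_one hdc]; linarith
    have key := hconv _ ht _ hs a (left_mem_Icc.mpr hab.le) b (right_mem_Icc.mpr hab.le)
      c (left_mem_Icc.mpr hcd.le) d (right_mem_Icc.mpr hcd.le)
    have e1 : (b - x) / (b - a) * a + (1 - (b - x) / (b - a)) * b = x := by
      field_simp; ring
    have e2 : (d - y) / (d - c) * c + (1 - (d - y) / (d - c)) * d = y := by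
      field_simp; ring
    rw [e1, e2] at key
    refine key.trans_eq ?_
    show _ = g x y
    rw [hg]
    field_simp
    ring
  -- integrability of g
  have hgc : Continuous (fun p : ℝ × ℝ => g p.1 p.2) := by
    rw [hg]; fun_prop
  have hgint : IntegrableOn (fun p : ℝ × ℝ => g p.1 p.2) (Icc a b ×ˢ Icc c d) :=
    hgc.continuousOn.integrableOn_compact (isCompact_Icc.prod isCompact_Icc)
  -- set integral comparison
  have hmono : ∫ p in Icc a b ×ˢ Icc c d, f p.1 p.2 ≤ ∫ p in Icc a b ×ˢ Icc c d, g p.1 p.2 :=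
    setIntegral_mono_on hint hgint (measurableSet_Icc.prod measurableSet_Icc) hpt
  -- conversion to iterated interval integrals
  have conv : ∀ h : ℝ → ℝ → ℝ, IntegrableOn (fun p : ℝ × ℝ => h p.1 p.2) (Icc a b ×ˢ Icc c d) →
      ∫ p in Icc a b ×ˢ Icc c d, h p.1 p.2 = ∫ x in a..b, ∫ y in c..d, h x y := by
    intro h hhint
    rw [Measure.volume_eq_prod] at hhint ⊢
    rw [MeasureTheory.setIntegral_prod _ hhint]
    rw [intervalIntegral.integral_of_le hab.le, integral_Icc_eq_integral_Ioc]
    refine setIntegral_congr_fun measurableSet_Ioc fun x _ => ?_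
    rw [intervalIntegral.integral_of_le hcd.le, integral_Icc_eq_integral_Ioc]
  -- compute the integral of g
  have hin : ∀ x : ℝ, ∫ y in c..d, g x y =
      ((b - x) * (f a c + f a d) + (x - a) * (f b c + f b d)) * ((d - c) ^ 2 / 2 / K) := by
    intro x
    have h1 : (fun y : ℝ => g x y) = fun y : ℝ =>
        ((d - y) * ((b - x) * f a c + (x - a) * f b c)
          + (y - c) * ((b - x) * f a d + (x - a) * f b d)) / K :=
      funext fun y => by rw [hg]; ring
    rw [h1, intervalIntegral.integral_div, hh_linear_integral]
    ring
  have hgval : ∫ x in a..b, ∫ y in c..d, g x y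
      = K * ((f a c + f a d + f b c + f b d) / 4) := by
    have h2 : (fun x : ℝ => ∫ y in c..d, g x y) = fun x : ℝ =>
        ((b - x) * (f a c + f a d) + (x - a) * (f b c + f b d)) * ((d - c) ^ 2 / 2 / K) :=
      funext fun x => hin x
    rw [h2, intervalIntegral.integral_mul_const, hh_linear_integral, hK]
    field_simp
    ring
  have hI : ∫ x in a..b, ∫ y in c..d, f x y ≤ K * ((f a c + f a d + f b c + f b d) / 4) := by
    rw [← conv f hint, ← hgval, ← conv g hgint]; exact hmono
  rw [one_div, inv_mul_le_iff₀ hKpos]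
  exact hI
end

section
/- Let a < b and c < d be real numbers, Δ = [a,b] × [c,d], and let f : Δ → ℝ be (L₁, L₂)-Lipschitz on Δ with L₁, L₂ > 0. Then |f((a+b)/2, (c+d)/2) − (1/((b-a)(d-c))) ∫_a^b ∫_c^d f(x,y) dy dx| ≤ (1/16)(4·L₁·(b-a) + 4·L₂·(d-c)), i.e., the left-hand side is at most (L₁·(b-a) + L₂·(d-c))/4. -/
open MeasureTheory Set intervalIntegral

lemma abs_mid_integral (u v : ℝ) (h : u ≤ v) :
    ∫ x in u..v, |x - (u + v) / 2| = (v - u) ^ 2 / 4 := by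
  set w := (u + v) / 2 with hw
  have h1 : u ≤ w := by rw [hw]; linarith
  have h2 : w ≤ v := by rw [hw]; linarith
  have i1 : IntervalIntegrable (fun x => |x - w|) volume u w :=
    (continuous_abs.comp (continuous_id.sub continuous_const)).intervalIntegrable _ _
  have i2 : IntervalIntegrable (fun x => |x - w|) volume w v :=
    (continuous_abs.comp (continuous_id.sub continuous_const)).intervalIntegrable _ _
  rw [← intervalIntegral.integral_add_adjacent_intervals i1 i2]
  have e1 : ∫ x in u..w, |x - w| = ∫ x in u..w, (w - x) := by
    apply intervalIntegral.integral_congr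
    intro x hx
    rw [uIcc_of_le h1] at hx
    simp only
    rw [abs_of_nonpos (by linarith [hx.2])]
    ring
  have e2 : ∫ x in w..v, |x - w| = ∫ x in w..v, (x - w) := by
    apply intervalIntegral.integral_congr
    intro x hx
    rw [uIcc_of_le h2] at hx
    simp only
    rw [abs_of_nonneg (by linarith [hx.1])]
  rw [e1, e2]
  have j1 : ∫ x in u..w, (w - x) = w * (w - u) - (w ^ 2 - u ^ 2) / 2 := by
    rw [intervalIntegral.integral_sub intervalIntegrable_const
      (intervalIntegral.intervalIntegrable_id), intervalIntegral.integral_const,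
      integral_id]
    simp only [smul_eq_mul]
    ring
  have j2 : ∫ x in w..v, (x - w) = (v ^ 2 - w ^ 2) / 2 - w * (v - w) := by
    rw [intervalIntegral.integral_sub intervalIntegral.intervalIntegrable_id
      intervalIntegrable_const, intervalIntegral.integral_const, integral_id]
    simp only [smul_eq_mul]
    ring
  rw [j1, j2, hw]
  ring

/-- Theorem 5, inequality (2.2) (with `M₁ = 4L₁`, `M₂ = 4L₂`): for an
`(L₁, L₂)`-Lipschitz function on `[a,b] × [c,d]`,
`|f((a+b)/2,(c+d)/2) − (1/((b-a)(d-c))) ∫∫ f| ≤ (1/16)(4L₁(b-a) + 4L₂(d-c))`. -/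
theorem hadamard_lipschitz_midpoint
    (a b c d L₁ L₂ : ℝ) (hab : a < b) (hcd : c < d) (hL₁ : 0 < L₁) (hL₂ : 0 < L₂)
    (f : ℝ → ℝ → ℝ)
    (hf : ∀ t₁ ∈ Icc a b, ∀ t₂ ∈ Icc a b, ∀ s₁ ∈ Icc c d, ∀ s₂ ∈ Icc c d,
      |f t₁ s₁ - f t₂ s₂| ≤ L₁ * |t₁ - t₂| + L₂ * |s₁ - s₂|) :
    |f ((a + b) / 2) ((c + d) / 2) -
        (1 / ((b - a) * (d - c))) * ∫ x in a..b, ∫ y in c..d, f x y| ≤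
      (1 / 16) * (4 * L₁ * (b - a) + 4 * L₂ * (d - c)) := by
  have hab' : (0:ℝ) < b - a := by linarith
  have hcd' : (0:ℝ) < d - c := by linarith
  set m := (a + b) / 2 with hm_def
  set n := (c + d) / 2 with hn_def
  have hm : m ∈ Icc a b := ⟨by rw [hm_def]; linarith, by rw [hm_def]; linarith⟩
  have hn : n ∈ Icc c d := ⟨by rw [hn_def]; linarith, by rw [hn_def]; linarith⟩
  set M := f m n with hM_def
  -- integrability of inner slices
  have hint : ∀ x ∈ Icc a b, IntervalIntegrable (f x) volume c d := by
    intro x hx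
    have hlip : LipschitzOnWith (Real.toNNReal L₂) (f x) (Icc c d) := by
      apply LipschitzOnWith.of_dist_le_mul
      intro y₁ h₁ y₂ h₂
      rw [Real.dist_eq, Real.dist_eq, Real.coe_toNNReal _ hL₂.le]
      have := hf x hx x hx y₁ h₁ y₂ h₂
      simpa using this
    exact hlip.continuousOn.intervalIntegrable_of_Icc hcd.le
  set g : ℝ → ℝ := fun x => ∫ y in c..d, f x y with hg_def
  -- g is Lipschitz on [a,b]
  have hg_lip : ∀ x₁ ∈ Icc a b, ∀ x₂ ∈ Icc a b,
      |g x₁ - g x₂| ≤ (L₁ * (d - c)) * |x₁ - x₂| := by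
    intro x₁ h₁ x₂ h₂
    rw [hg_def]
    simp only
    rw [← intervalIntegral.integral_sub (hint x₁ h₁) (hint x₂ h₂)]
    calc |∫ y in c..d, (f x₁ y - f x₂ y)| ≤ ∫ y in c..d, |f x₁ y - f x₂ y| :=
          intervalIntegral.abs_integral_le_integral_abs hcd.le
      _ ≤ ∫ y in c..d, L₁ * |x₁ - x₂| := by
          apply intervalIntegral.integral_mono_on hcd.le
            ((hint x₁ h₁).sub (hint x₂ h₂)).abs intervalIntegrable_const
          intro y hy
          have := hf x₁ h₁ x₂ h₂ y hy y hy
          simpa using this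
      _ = (L₁ * (d - c)) * |x₁ - x₂| := by
          rw [intervalIntegral.integral_const]; simp; ring
  have hg_cont : ContinuousOn g (Icc a b) := by
    have : LipschitzOnWith (Real.toNNReal (L₁ * (d - c))) g (Icc a b) := by
      apply LipschitzOnWith.of_dist_le_mul
      intro x₁ h₁ x₂ h₂
      rw [Real.dist_eq, Real.dist_eq,
        Real.coe_toNNReal _ (by positivity : (0:ℝ) ≤ L₁ * (d - c))]
      exact hg_lip x₁ h₁ x₂ h₂
    exact this.continuousOn
  have hg_int : IntervalIntegrable g volume a b :=
    hg_cont.intervalIntegrable_of_Icc hab.le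
  -- inner integral of midpoint deviation bound, for x ∈ [a,b]
  have hJ : ∫ y in c..d, |n - y| = (d - c) ^ 2 / 4 := by
    have : ∀ y, |n - y| = |y - (c + d) / 2| := by
      intro y; rw [hn_def, abs_sub_comm]
    simp_rw [this]
    exact abs_mid_integral c d hcd.le
  -- pointwise bound on the inner deviation
  have hinner : ∀ x ∈ Icc a b,
      |M * (d - c) - g x| ≤ L₁ * (d - c) * |m - x| + L₂ * ((d - c) ^ 2 / 4) := by
    intro x hx
    have e : M * (d - c) - g x = ∫ y in c..d, (M - f x y) := by
      rw [intervalIntegral.integral_sub intervalIntegrable_const (hint x hx),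
        intervalIntegral.integral_const, hg_def]
      simp [mul_comm]
    rw [e]
    calc |∫ y in c..d, (M - f x y)| ≤ ∫ y in c..d, |M - f x y| :=
          intervalIntegral.abs_integral_le_integral_abs hcd.le
      _ ≤ ∫ y in c..d, (L₁ * |m - x| + L₂ * |n - y|) := by
          apply intervalIntegral.integral_mono_on hcd.le
            (intervalIntegrable_const.sub (hint x hx)).abs
          · exact ((by fun_prop : Continuous fun y : ℝ => L₁ * |m - x| + L₂ * |n - y|)).intervalIntegrable _ _
          · intro y hy
            exact hf m hm x hx n hn y hy
      _ = L₁ * (d - c) * |m - x| + L₂ * ((d - c) ^ 2 / 4) := by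
          rw [intervalIntegral.integral_add intervalIntegrable_const
            ((by fun_prop : Continuous fun y : ℝ => L₂ * |n - y|).intervalIntegrable c d),
            intervalIntegral.integral_const, intervalIntegral.integral_const_mul, hJ]
          simp; ring
  -- rewrite the difference
  have key : M - (1 / ((b - a) * (d - c))) * ∫ x in a..b, g x
      = (1 / ((b - a) * (d - c))) * ∫ x in a..b, (M * (d - c) - g x) := by
    rw [intervalIntegral.integral_sub intervalIntegrable_const hg_int,
      intervalIntegral.integral_const]
    field_simp
    ring
  have habs_bound : IntervalIntegrable
      (fun x => L₁ * (d - c) * |m - x| + L₂ * ((d - c) ^ 2 / 4)) volume a b :=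
    ((by fun_prop : Continuous fun x : ℝ => L₁ * (d - c) * |m - x| + L₂ * ((d - c) ^ 2 / 4))).intervalIntegrable _ _
  have hIm : ∫ x in a..b, |m - x| = (b - a) ^ 2 / 4 := by
    have : ∀ x, |m - x| = |x - (a + b) / 2| := by
      intro x; rw [hm_def, abs_sub_comm]
    simp_rw [this]
    exact abs_mid_integral a b hab.le
  have hbig : |∫ x in a..b, (M * (d - c) - g x)|
      ≤ L₁ * (d - c) * ((b - a) ^ 2 / 4) + L₂ * ((d - c) ^ 2 / 4) * (b - a) := by
    calc |∫ x in a..b, (M * (d - c) - g x)|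
        ≤ ∫ x in a..b, |M * (d - c) - g x| :=
          intervalIntegral.abs_integral_le_integral_abs hab.le
      _ ≤ ∫ x in a..b, (L₁ * (d - c) * |m - x| + L₂ * ((d - c) ^ 2 / 4)) := by
          apply intervalIntegral.integral_mono_on hab.le
            (intervalIntegrable_const.sub hg_int).abs habs_bound
          exact hinner
      _ = L₁ * (d - c) * ((b - a) ^ 2 / 4) + L₂ * ((d - c) ^ 2 / 4) * (b - a) := by
          rw [intervalIntegral.integral_add
            ((by fun_prop : Continuous fun x : ℝ => L₁ * (d - c) * |m - x|).intervalIntegrable a b)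
            intervalIntegrable_const,
            intervalIntegral.integral_const_mul, hIm, intervalIntegral.integral_const]
          simp; ring
  -- conclude
  have hpos : (0:ℝ) < (b - a) * (d - c) := mul_pos hab' hcd'
  rw [key, abs_mul, abs_of_pos (by positivity : (0:ℝ) < 1 / ((b - a) * (d - c)))]
  calc (1 / ((b - a) * (d - c))) * |∫ x in a..b, (M * (d - c) - g x)|
      ≤ (1 / ((b - a) * (d - c))) *
        (L₁ * (d - c) * ((b - a) ^ 2 / 4) + L₂ * ((d - c) ^ 2 / 4) * (b - a)) := by
        apply mul_le_mul_of_nonneg_left hbig (by positivity)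
    _ = (1 / 16) * (4 * L₁ * (b - a) + 4 * L₂ * (d - c)) := by
        field_simp
        ring
end

section
/- Let a < b and c < d be real numbers, Δ = [a,b] × [c,d], and let f : Δ → ℝ be (L₁, L₂)-Lipschitz on Δ with L₁, L₂ > 0. Then |(f(a,c) + f(a,d) + f(b,c) + f(b,d))/4 − (1/((b-a)(d-c))) ∫_a^b ∫_c^d f(x,y) dy dx| ≤ (1/12)(4·L₁·(b-a) + 4·L₂·(d-c)), i.e., the left-hand side is at most (L₁·(b-a) + L₂·(d-c))/3. -/
open MeasureTheory Set intervalIntegral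


lemma trap_1d (a b L : ℝ) (hab : a < b) (hL : 0 ≤ L) (g : ℝ → ℝ)
    (hg : ∀ s ∈ Icc a b, ∀ t ∈ Icc a b, |g s - g t| ≤ L * |s - t|) :
    |(g a + g b) / 2 - (1 / (b - a)) * ∫ x in a..b, g x| ≤ L * (b - a) / 4 := by
  have hcont : ContinuousOn g (Icc a b) := by
    refine (LipschitzOnWith.of_dist_le_mul (K := Real.toNNReal L) ?_).continuousOn
    intro s hs t ht
    simpa [Real.dist_eq, Real.coe_toNNReal L hL] using hg s hs t ht
  have hint : IntervalIntegrable g volume a b := by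
    apply ContinuousOn.intervalIntegrable; rwa [uIcc_of_le hab.le]
  have hrcont : ContinuousOn (fun x => g (a + b - x)) (Icc a b) := by
    apply hcont.comp (Continuous.continuousOn (by continuity))
    intro x hx
    exact ⟨by linarith [hx.2], by linarith [hx.1]⟩
  have hrint : IntervalIntegrable (fun x => g (a + b - x)) volume a b := by
    apply ContinuousOn.intervalIntegrable; rwa [uIcc_of_le hab.le]
  have hrefl : (∫ x in a..b, g (a + b - x)) = ∫ x in a..b, g x := by
    have := intervalIntegral.integral_comp_sub_left (a := a) (b := b) g (a + b)
    simpa using this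
  set G : ℝ → ℝ := fun x => g a + g b - g x - g (a + b - x) with hG
  have hGcont : ContinuousOn G (Icc a b) := by
    apply ContinuousOn.sub (ContinuousOn.sub continuousOn_const hcont) hrcont
  have hGint : IntervalIntegrable G volume a b := by
    apply ContinuousOn.intervalIntegrable; rwa [uIcc_of_le hab.le]
  have hGval : (∫ x in a..b, G x) = (g a + g b) * (b - a) - 2 * ∫ x in a..b, g x := by
    rw [hG]
    rw [intervalIntegral.integral_sub ((_root_.intervalIntegrable_const).sub hint) hrint,
      intervalIntegral.integral_sub _root_.intervalIntegrable_const hint,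
      intervalIntegral.integral_const, hrefl]
    simp
    ring
  -- pointwise bound
  have hbound : ∀ x ∈ Icc a b, |G x| ≤ 2 * L * min (x - a) (b - x) := by
    intro x hx
    have hx' : a + b - x ∈ Icc a b := ⟨by linarith [hx.2], by linarith [hx.1]⟩
    have ha : a ∈ Icc a b := ⟨le_refl a, hab.le⟩
    have hb : b ∈ Icc a b := ⟨hab.le, le_refl b⟩
    rcases le_total x ((a + b) / 2) with h | h
    · have e1 : |g a - g x| ≤ L * (x - a) := by
        have := hg a ha x hx
        rwa [show |a - x| = x - a by rw [abs_sub_comm]; exact abs_of_nonneg (by linarith [hx.1])] at this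
      have e2 : |g b - g (a + b - x)| ≤ L * (x - a) := by
        have := hg b hb (a + b - x) hx'
        rwa [show |b - (a + b - x)| = x - a by rw [show b - (a+b-x) = x - a by ring]; exact abs_of_nonneg (by linarith [hx.1])] at this
      have hmin : min (x - a) (b - x) = x - a := min_eq_left (by linarith)
      rw [hmin]
      calc |G x| = |(g a - g x) + (g b - g (a + b - x))| := by rw [hG]; ring_nf
        _ ≤ |g a - g x| + |g b - g (a + b - x)| := abs_add_le _ _
        _ ≤ 2 * L * (x - a) := by linarith
    · have e1 : |g a - g (a + b - x)| ≤ L * (b - x) := by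
        have := hg a ha (a + b - x) hx'
        rwa [show |a - (a + b - x)| = b - x by rw [show a - (a+b-x) = x - b by ring]; rw [abs_sub_comm]; exact abs_of_nonneg (by linarith [hx.2])] at this
      have e2 : |g b - g x| ≤ L * (b - x) := by
        have := hg b hb x hx
        rwa [show |b - x| = b - x from abs_of_nonneg (by linarith [hx.2])] at this
      have hmin : min (x - a) (b - x) = b - x := min_eq_right (by linarith)
      rw [hmin]
      calc |G x| = |(g a - g (a + b - x)) + (g b - g x)| := by rw [hG]; ring_nf
        _ ≤ _ + _ := abs_add_le _ _
        _ ≤ 2 * L * (b - x) := by linarith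
  -- integral of min
  have hmcont : Continuous (fun x : ℝ => 2 * L * min (x - a) (b - x)) := by continuity
  have hmint : ∀ u v : ℝ, IntervalIntegrable (fun x : ℝ => 2 * L * min (x - a) (b - x)) volume u v :=
    fun u v => (hmcont.intervalIntegrable u v)
  set m := (a + b) / 2 with hm
  have hint_min : (∫ x in a..b, 2 * L * min (x - a) (b - x)) = 2 * L * ((b - a) ^ 2 / 4) := by
    rw [← intervalIntegral.integral_add_adjacent_intervals (a := a) (b := m) (c := b) (hmint a m) (hmint m b)]
    have h1 : (∫ x in a..m, 2 * L * min (x - a) (b - x)) = ∫ x in a..m, 2 * L * (x - a) := by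
      apply intervalIntegral.integral_congr
      intro x hx
      rw [uIcc_of_le (by simp [hm]; linarith)] at hx
      have hh : min (x - a) (b - x) = x - a := min_eq_left (by simp [hm] at hx; linarith [hx.2])
      show 2 * L * min (x - a) (b - x) = 2 * L * (x - a)
      rw [hh]
    have h2 : (∫ x in m..b, 2 * L * min (x - a) (b - x)) = ∫ x in m..b, 2 * L * (b - x) := by
      apply intervalIntegral.integral_congr
      intro x hx
      rw [uIcc_of_le (by simp [hm]; linarith)] at hx
      have hh : min (x - a) (b - x) = b - x := min_eq_right (by simp [hm] at hx; linarith [hx.1])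
      show 2 * L * min (x - a) (b - x) = 2 * L * (b - x)
      rw [hh]
    rw [h1, h2]
    have i1 : (∫ x in a..m, 2 * L * (x - a)) = 2 * L * ((m - a)^2 / 2) := by
      rw [intervalIntegral.integral_const_mul,
        intervalIntegral.integral_sub intervalIntegrable_id _root_.intervalIntegrable_const,
        integral_id, intervalIntegral.integral_const, smul_eq_mul]
      ring
    have i2 : (∫ x in m..b, 2 * L * (b - x)) = 2 * L * ((b - m)^2 / 2) := by
      rw [intervalIntegral.integral_const_mul,
        intervalIntegral.integral_sub _root_.intervalIntegrable_const intervalIntegrable_id,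
        integral_id, intervalIntegral.integral_const, smul_eq_mul]
      ring
    rw [i1, i2, hm]
    ring
  have habs : |∫ x in a..b, G x| ≤ 2 * L * ((b - a) ^ 2 / 4) := by
    rw [← hint_min]
    calc |∫ x in a..b, G x| ≤ ∫ x in a..b, |G x| := by
          apply intervalIntegral.abs_integral_le_integral_abs hab.le
      _ ≤ ∫ x in a..b, 2 * L * min (x - a) (b - x) := by
          apply intervalIntegral.integral_mono_on hab.le hGint.abs (hmint a b)
          exact hbound
  -- conclude
  have hba : (0:ℝ) < b - a := by linarith
  have key : (g a + g b) / 2 - (1 / (b - a)) * ∫ x in a..b, g x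
      = (1 / (2 * (b - a))) * ∫ x in a..b, G x := by
    rw [hGval]; field_simp
  rw [key, abs_mul, abs_of_pos (by positivity : (0:ℝ) < 1 / (2 * (b - a)))]
  calc (1 / (2 * (b - a))) * |∫ x in a..b, G x| ≤ (1 / (2 * (b - a))) * (2 * L * ((b - a) ^ 2 / 4)) := by
        apply mul_le_mul_of_nonneg_left habs (by positivity)
    _ = L * (b - a) / 4 := by field_simp

/-- Theorem 5, inequality (2.3) (with `M₁ = 4L₁`, `M₂ = 4L₂`): for an
`(L₁, L₂)`-Lipschitz function on `[a,b] × [c,d]`,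
`|(f(a,c)+f(a,d)+f(b,c)+f(b,d))/4 − (1/((b-a)(d-c))) ∫∫ f|
  ≤ (1/12)(4L₁(b-a) + 4L₂(d-c))`. -/

theorem hadamard_lipschitz_trapezoid
    (a b c d L₁ L₂ : ℝ) (hab : a < b) (hcd : c < d) (hL₁ : 0 < L₁) (hL₂ : 0 < L₂)
    (f : ℝ → ℝ → ℝ)
    (hf : ∀ t₁ ∈ Icc a b, ∀ t₂ ∈ Icc a b, ∀ s₁ ∈ Icc c d, ∀ s₂ ∈ Icc c d,
      |f t₁ s₁ - f t₂ s₂| ≤ L₁ * |t₁ - t₂| + L₂ * |s₁ - s₂|) :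
    |(f a c + f a d + f b c + f b d) / 4 -
        (1 / ((b - a) * (d - c))) * ∫ x in a..b, ∫ y in c..d, f x y| ≤
      (1 / 12) * (4 * L₁ * (b - a) + 4 * L₂ * (d - c)) := by
  have hc : c ∈ Icc c d := ⟨le_refl c, hcd.le⟩
  have hd : d ∈ Icc c d := ⟨hcd.le, le_refl d⟩
  have hdc : (0:ℝ) < d - c := by linarith
  have hba : (0:ℝ) < b - a := by linarith
  have hfx : ∀ x ∈ Icc a b, ∀ s₁ ∈ Icc c d, ∀ s₂ ∈ Icc c d,
      |f x s₁ - f x s₂| ≤ L₂ * |s₁ - s₂| := by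
    intro x hx s₁ h1 s₂ h2
    simpa using hf x hx x hx s₁ h1 s₂ h2
  set F : ℝ → ℝ := fun x => ∫ y in c..d, f x y with hFdef
  set h : ℝ → ℝ := fun x => (f x c + f x d) / 2 with hhdef
  -- h is L₁-Lipschitz on [a,b]
  have hh : ∀ s ∈ Icc a b, ∀ t ∈ Icc a b, |h s - h t| ≤ L₁ * |s - t| := by
    intro s hs t ht
    have e1 := hf s hs t ht c hc c hc
    have e2 := hf s hs t ht d hd d hd
    simp only [sub_self, abs_zero, mul_zero, add_zero] at e1 e2
    have key : h s - h t = ((f s c - f t c) + (f s d - f t d)) / 2 := by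
      simp only [hhdef]; ring
    rw [key, abs_div, abs_two]
    have := (abs_add_le (f s c - f t c) (f s d - f t d))
    have h2 : |f s c - f t c + (f s d - f t d)| ≤ 2 * (L₁ * |s - t|) := by linarith
    linarith
  -- inner integrability
  have hfyint : ∀ x ∈ Icc a b, IntervalIntegrable (f x) volume c d := by
    intro x hx
    apply ContinuousOn.intervalIntegrable
    rw [uIcc_of_le hcd.le]
    refine (LipschitzOnWith.of_dist_le_mul (K := Real.toNNReal L₂) ?_).continuousOn
    intro s hs t ht
    simpa [Real.dist_eq, Real.coe_toNNReal L₂ hL₂.le] using hfx x hx s hs t ht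
  -- F is Lipschitz on [a,b]
  have hF : ∀ s ∈ Icc a b, ∀ t ∈ Icc a b, |F s - F t| ≤ (L₁ * (d - c)) * |s - t| := by
    intro s hs t ht
    have hsub : F s - F t = ∫ y in c..d, (f s y - f t y) :=
      (intervalIntegral.integral_sub (hfyint s hs) (hfyint t ht)).symm
    rw [hsub]
    have hptw : ∀ y ∈ Set.uIoc c d, ‖f s y - f t y‖ ≤ L₁ * |s - t| := by
      intro y hy
      rw [Set.uIoc_of_le hcd.le] at hy
      have hy' : y ∈ Icc c d := ⟨hy.1.le, hy.2⟩
      have := hf s hs t ht y hy' y hy'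
      simpa [Real.norm_eq_abs] using this
    have := intervalIntegral.norm_integral_le_of_norm_le_const hptw
    rw [Real.norm_eq_abs] at this
    calc |∫ y in c..d, (f s y - f t y)| ≤ L₁ * |s - t| * |d - c| := this
      _ = (L₁ * (d - c)) * |s - t| := by rw [abs_of_pos hdc]; ring
  -- integrability of h and F on [a,b]
  have hLip_int : ∀ (L : ℝ), 0 ≤ L → ∀ g : ℝ → ℝ,
      (∀ s ∈ Icc a b, ∀ t ∈ Icc a b, |g s - g t| ≤ L * |s - t|) →
      IntervalIntegrable g volume a b := by
    intro L hL g hg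
    apply ContinuousOn.intervalIntegrable
    rw [uIcc_of_le hab.le]
    refine (LipschitzOnWith.of_dist_le_mul (K := Real.toNNReal L) ?_).continuousOn
    intro s hs t ht
    simpa [Real.dist_eq, Real.coe_toNNReal L hL] using hg s hs t ht
  have hhint : IntervalIntegrable h volume a b := hLip_int L₁ hL₁.le h hh
  have hFint : IntervalIntegrable F volume a b := hLip_int (L₁ * (d - c)) (by positivity) F hF
  -- first piece: trapezoid in x for h
  have t1 : |(h a + h b) / 2 - (1 / (b - a)) * ∫ x in a..b, h x| ≤ L₁ * (b - a) / 4 :=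
    trap_1d a b L₁ hab hL₁.le h hh
  -- second piece: for each x, trapezoid in y
  have t2 : ∀ x ∈ Icc a b, |h x - (1 / (d - c)) * F x| ≤ L₂ * (d - c) / 4 := by
    intro x hx
    exact trap_1d c d L₂ hcd hL₂.le (f x) (hfx x hx)
  -- integral of the defect
  have hGint : IntervalIntegrable (fun x => h x - (1 / (d - c)) * F x) volume a b :=
    hhint.sub (hFint.const_mul _)
  have t2' : |∫ x in a..b, (h x - (1 / (d - c)) * F x)| ≤ L₂ * (d - c) / 4 * |b - a| := by
    rw [← Real.norm_eq_abs]
    apply intervalIntegral.norm_integral_le_of_norm_le_const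
    intro x hx
    rw [Set.uIoc_of_le hab.le] at hx
    rw [Real.norm_eq_abs]
    exact (t2 x ⟨hx.1.le, hx.2⟩)
  rw [abs_of_pos hba] at t2'
  have hsplit : (∫ x in a..b, (h x - (1 / (d - c)) * F x))
      = (∫ x in a..b, h x) - (1 / (d - c)) * ∫ x in a..b, F x := by
    rw [intervalIntegral.integral_sub hhint (hFint.const_mul _),
      intervalIntegral.integral_const_mul]
  -- assemble
  have decomp : (f a c + f a d + f b c + f b d) / 4 -
      (1 / ((b - a) * (d - c))) * ∫ x in a..b, ∫ y in c..d, f x y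
      = ((h a + h b) / 2 - (1 / (b - a)) * ∫ x in a..b, h x)
        + (1 / (b - a)) * ∫ x in a..b, (h x - (1 / (d - c)) * F x) := by
    rw [hsplit]
    simp only [hhdef, hFdef]
    field_simp
    ring
  rw [decomp]
  calc |((h a + h b) / 2 - (1 / (b - a)) * ∫ x in a..b, h x)
        + (1 / (b - a)) * ∫ x in a..b, (h x - (1 / (d - c)) * F x)|
      ≤ |(h a + h b) / 2 - (1 / (b - a)) * ∫ x in a..b, h x|
        + |(1 / (b - a)) * ∫ x in a..b, (h x - (1 / (d - c)) * F x)| := abs_add_le _ _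
    _ ≤ L₁ * (b - a) / 4 + L₂ * (d - c) / 4 := by
        refine add_le_add t1 ?_
        rw [abs_mul, abs_of_pos (by positivity : (0:ℝ) < 1 / (b - a))]
        calc (1 / (b - a)) * |∫ x in a..b, (h x - (1 / (d - c)) * F x)|
            ≤ (1 / (b - a)) * (L₂ * (d - c) / 4 * (b - a)) :=
              mul_le_mul_of_nonneg_left t2' (by positivity)
          _ = L₂ * (d - c) / 4 := by field_simp
    _ ≤ (1 / 12) * (4 * L₁ * (b - a) + 4 * L₂ * (d - c)) := by nlinarith
end

section
/- Let a < b and c < d be real numbers, Δ = [a,b] × [c,d], and let f : Δ → ℝ be (L₁, L₂)-Lipschitz on Δ with L₁, L₂ > 0. Then for all t, s ∈ [0,1], |t·s·f(a,c) + s·(1-t)·f(b,c) + t·(1-s)·f(a,d) + (1-t)·(1-s)·f(b,d) − f(t·a + (1-t)·b, s·c + (1-s)·d)| ≤ (t·s·(1-t)·2L₁ + t·(1-s)·(1-t)·2L₁)·(b-a) + (t·s·(1-s)·2L₂ + s·(1-s)·(1-t)·2L₂)·(d-c), i.e., the left-hand side is at most 2·L₁·t·(1-t)·(b-a) + 2·L₂·s·(1-s)·(d-c).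 -/
open Set

/-- Pointwise estimate (2.4) (with `L₁ = L₃ = L₅ = L₇` and `L₂ = L₄ = L₆ = L₈`):
for an `(L₁, L₂)`-Lipschitz function on `[a,b] × [c,d]` and `t, s ∈ [0,1]`,
`|ts f(a,c) + s(1-t) f(b,c) + t(1-s) f(a,d) + (1-t)(1-s) f(b,d)
  − f(ta+(1-t)b, sc+(1-s)d)|
  ≤ (ts(1-t)·2L₁ + t(1-s)(1-t)·2L₁)(b-a) + (ts(1-s)·2L₂ + s(1-s)(1-t)·2L₂)(d-c)`. -/
theorem hadamard_lipschitz_pointwise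
    (a b c d L₁ L₂ : ℝ) (hab : a < b) (hcd : c < d) (hL₁ : 0 < L₁) (hL₂ : 0 < L₂)
    (f : ℝ → ℝ → ℝ)
    (hf : ∀ t₁ ∈ Icc a b, ∀ t₂ ∈ Icc a b, ∀ s₁ ∈ Icc c d, ∀ s₂ ∈ Icc c d,
      |f t₁ s₁ - f t₂ s₂| ≤ L₁ * |t₁ - t₂| + L₂ * |s₁ - s₂|) :
    ∀ t ∈ Icc (0:ℝ) 1, ∀ s ∈ Icc (0:ℝ) 1,
      |t * s * f a c + s * (1 - t) * f b c + t * (1 - s) * f a d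
          + (1 - t) * (1 - s) * f b d
          - f (t * a + (1 - t) * b) (s * c + (1 - s) * d)| ≤
        (t * s * (1 - t) * (2 * L₁) + t * (1 - s) * (1 - t) * (2 * L₁)) * (b - a)
          + (t * s * (1 - s) * (2 * L₂) + s * (1 - s) * (1 - t) * (2 * L₂)) * (d - c) := by
  intro t ht s hs
  obtain ⟨ht0, ht1⟩ := ht
  obtain ⟨hs0, hs1⟩ := hs
  set x := t * a + (1 - t) * b with hx
  set y := s * c + (1 - s) * d with hy
  have hxm : x ∈ Icc a b := ⟨by nlinarith, by nlinarith⟩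
  have hym : y ∈ Icc c d := ⟨by nlinarith, by nlinarith⟩
  have hA : a ∈ Icc a b := ⟨le_rfl, hab.le⟩
  have hB : b ∈ Icc a b := ⟨hab.le, le_rfl⟩
  have hC : c ∈ Icc c d := ⟨le_rfl, hcd.le⟩
  have hD : d ∈ Icc c d := ⟨hcd.le, le_rfl⟩
  have hax : |a - x| = (1 - t) * (b - a) := by
    rw [abs_of_nonpos (by nlinarith)]; ring
  have hbx : |b - x| = t * (b - a) := by
    rw [abs_of_nonneg (by nlinarith)]; ring
  have hcy : |c - y| = (1 - s) * (d - c) := by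
    rw [abs_of_nonpos (by nlinarith)]; ring
  have hdy : |d - y| = s * (d - c) := by
    rw [abs_of_nonneg (by nlinarith)]; ring
  have h1 := hf a hA x hxm c hC y hym
  have h2 := hf b hB x hxm c hC y hym
  have h3 := hf a hA x hxm d hD y hym
  have h4 := hf b hB x hxm d hD y hym
  rw [hax, hcy] at h1
  rw [hbx, hcy] at h2
  rw [hax, hdy] at h3
  rw [hbx, hdy] at h4
  rw [abs_le] at h1 h2 h3 h4
  rw [abs_le]
  obtain ⟨h1l, h1r⟩ := h1
  obtain ⟨h2l, h2r⟩ := h2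
  obtain ⟨h3l, h3r⟩ := h3
  obtain ⟨h4l, h4r⟩ := h4
  have c1 : 0 ≤ t * s := mul_nonneg ht0 hs0
  have c2 : 0 ≤ s * (1 - t) := mul_nonneg hs0 (by linarith)
  have c3 : 0 ≤ t * (1 - s) := mul_nonneg ht0 (by linarith)
  have c4 : 0 ≤ (1 - t) * (1 - s) := mul_nonneg (by linarith) (by linarith)
  constructor
  · linarith [mul_le_mul_of_nonneg_left h1l c1, mul_le_mul_of_nonneg_left h2l c2,
      mul_le_mul_of_nonneg_left h3l c3, mul_le_mul_of_nonneg_left h4l c4]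
  · linarith [mul_le_mul_of_nonneg_left h1r c1, mul_le_mul_of_nonneg_left h2r c2,
      mul_le_mul_of_nonneg_left h3r c3, mul_le_mul_of_nonneg_left h4r c4]
end

section
/- Let a < b and c < d be real numbers, Δ = [a,b] × [c,d], and let f : Δ → ℝ be (L₁, L₂)-Lipschitz on Δ with L₁, L₂ > 0. Then for all t, s ∈ [0,1], |(1/4)·[f(t·a+(1-t)·b, s·c+(1-s)·d) + f(t·a+(1-t)·b, (1-s)·c+s·d) + f((1-t)·a+t·b, s·c+(1-s)·d) + f((1-t)·a+t·b, (1-s)·c+s·d)] − f((a+b)/2, (c+d)/2)| ≤ (1/8)·(4·L₁·|1−2t|·(b-a) + 4·L₂·|1−2s|·(d-c)), i.e., the left-hand side is at most (L₁·|1−2t|·(b-a) + L₂·|1−2s|·(d-c))/2. -/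
open Set

/-- Inequality (2.6) (with `L₁ = L₃ = L₅ = L₇` and `L₂ = L₄ = L₆ = L₈`): for an
`(L₁, L₂)`-Lipschitz function on `[a,b] × [c,d]` and `t, s ∈ [0,1]`,
`|(1/4)[f(ta+(1-t)b, sc+(1-s)d) + f(ta+(1-t)b, (1-s)c+sd)
      + f((1-t)a+tb, sc+(1-s)d) + f((1-t)a+tb, (1-s)c+sd)]
  − f((a+b)/2,(c+d)/2)| ≤ (1/8)(4L₁|1-2t|(b-a) + 4L₂|1-2s|(d-c))`. -/
theorem hadamard_lipschitz_symmetrized_pointwise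
    (a b c d L₁ L₂ : ℝ) (hab : a < b) (hcd : c < d) (hL₁ : 0 < L₁) (hL₂ : 0 < L₂)
    (f : ℝ → ℝ → ℝ)
    (hf : ∀ t₁ ∈ Icc a b, ∀ t₂ ∈ Icc a b, ∀ s₁ ∈ Icc c d, ∀ s₂ ∈ Icc c d,
      |f t₁ s₁ - f t₂ s₂| ≤ L₁ * |t₁ - t₂| + L₂ * |s₁ - s₂|) :
    ∀ t ∈ Icc (0:ℝ) 1, ∀ s ∈ Icc (0:ℝ) 1,
      |(1 / 4) * (f (t * a + (1 - t) * b) (s * c + (1 - s) * d)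
          + f (t * a + (1 - t) * b) ((1 - s) * c + s * d)
          + f ((1 - t) * a + t * b) (s * c + (1 - s) * d)
          + f ((1 - t) * a + t * b) ((1 - s) * c + s * d))
          - f ((a + b) / 2) ((c + d) / 2)| ≤
        (1 / 8) * (4 * L₁ * |1 - 2 * t| * (b - a) + 4 * L₂ * |1 - 2 * s| * (d - c)) := by
  intro t ht s hs
  obtain ⟨ht0, ht1⟩ := ht
  obtain ⟨hs0, hs1⟩ := hs
  have hmem : ∀ u ∈ Icc (0:ℝ) 1, ∀ x y : ℝ, x ≤ y → u * x + (1 - u) * y ∈ Icc x y := by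
    intro u hu x y hxy
    constructor <;> nlinarith [hu.1, hu.2]
  have hx1 : t * a + (1 - t) * b ∈ Icc a b := hmem t ⟨ht0, ht1⟩ a b hab.le
  have hx2 : (1 - t) * a + t * b ∈ Icc a b := by
    have := hmem (1 - t) ⟨by linarith, by linarith⟩ a b hab.le
    simpa using this
  have hy1 : s * c + (1 - s) * d ∈ Icc c d := hmem s ⟨hs0, hs1⟩ c d hcd.le
  have hy2 : (1 - s) * c + s * d ∈ Icc c d := by
    have := hmem (1 - s) ⟨by linarith, by linarith⟩ c d hcd.le
    simpa using this
  have hma : (a + b) / 2 ∈ Icc a b := ⟨by linarith, by linarith⟩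
  have hmc : (c + d) / 2 ∈ Icc c d := ⟨by linarith, by linarith⟩
  have key : ∀ x ∈ Icc a b, ∀ y ∈ Icc c d,
      |x - (a + b) / 2| = |1 - 2 * t| * (b - a) / 2 →
      |y - (c + d) / 2| = |1 - 2 * s| * (d - c) / 2 →
      |f x y - f ((a + b) / 2) ((c + d) / 2)| ≤
        L₁ * (|1 - 2 * t| * (b - a) / 2) + L₂ * (|1 - 2 * s| * (d - c) / 2) := by
    intro x hx y hy h1 h2
    have := hf x hx ((a + b) / 2) hma y hy ((c + d) / 2) hmc
    rw [h1, h2] at this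
    linarith
  have e1 : |t * a + (1 - t) * b - (a + b) / 2| = |1 - 2 * t| * (b - a) / 2 := by
    rw [show t * a + (1 - t) * b - (a + b) / 2 = (1 - 2 * t) * ((b - a) / 2) by ring,
      abs_mul, abs_of_nonneg (by linarith : (0:ℝ) ≤ (b - a) / 2)]
    ring
  have e2 : |(1 - t) * a + t * b - (a + b) / 2| = |1 - 2 * t| * (b - a) / 2 := by
    rw [show (1 - t) * a + t * b - (a + b) / 2 = -((1 - 2 * t) * ((b - a) / 2)) by ring,
      abs_neg, abs_mul, abs_of_nonneg (by linarith : (0:ℝ) ≤ (b - a) / 2)]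
    ring
  have e3 : |s * c + (1 - s) * d - (c + d) / 2| = |1 - 2 * s| * (d - c) / 2 := by
    rw [show s * c + (1 - s) * d - (c + d) / 2 = (1 - 2 * s) * ((d - c) / 2) by ring,
      abs_mul, abs_of_nonneg (by linarith : (0:ℝ) ≤ (d - c) / 2)]
    ring
  have e4 : |(1 - s) * c + s * d - (c + d) / 2| = |1 - 2 * s| * (d - c) / 2 := by
    rw [show (1 - s) * c + s * d - (c + d) / 2 = -((1 - 2 * s) * ((d - c) / 2)) by ring,
      abs_neg, abs_mul, abs_of_nonneg (by linarith : (0:ℝ) ≤ (d - c) / 2)]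
    ring
  have k11 := key _ hx1 _ hy1 e1 e3
  have k12 := key _ hx1 _ hy2 e1 e4
  have k21 := key _ hx2 _ hy1 e2 e3
  have k22 := key _ hx2 _ hy2 e2 e4
  have habs : ∀ z : ℝ, |z| ≤ |z - f ((a + b) / 2) ((c + d) / 2) + f ((a + b) / 2) ((c + d) / 2)| := fun z => le_of_eq (by ring_nf)
  have hrw : (1 / 4) * (f (t * a + (1 - t) * b) (s * c + (1 - s) * d)
          + f (t * a + (1 - t) * b) ((1 - s) * c + s * d)
          + f ((1 - t) * a + t * b) (s * c + (1 - s) * d)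
          + f ((1 - t) * a + t * b) ((1 - s) * c + s * d))
          - f ((a + b) / 2) ((c + d) / 2)
      = (1/4) * ((f (t * a + (1 - t) * b) (s * c + (1 - s) * d) - f ((a + b) / 2) ((c + d) / 2))
          + (f (t * a + (1 - t) * b) ((1 - s) * c + s * d) - f ((a + b) / 2) ((c + d) / 2))
          + (f ((1 - t) * a + t * b) (s * c + (1 - s) * d) - f ((a + b) / 2) ((c + d) / 2))
          + (f ((1 - t) * a + t * b) ((1 - s) * c + s * d) - f ((a + b) / 2) ((c + d) / 2))) := by
    ring
  rw [hrw, abs_mul, abs_of_nonneg (by norm_num : (0:ℝ) ≤ (1:ℝ)/4)]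
  have h4 : ∀ p q r u : ℝ, |p + q + r + u| ≤ |p| + |q| + |r| + |u| := by
    intro p q r u
    calc |p + q + r + u| ≤ |p + q + r| + |u| := abs_add_le _ _
      _ ≤ (|p + q| + |r|) + |u| := by gcongr; exact abs_add_le _ _
      _ ≤ ((|p| + |q|) + |r|) + |u| := by gcongr; exact abs_add_le _ _
  have hsum := h4 (f (t * a + (1 - t) * b) (s * c + (1 - s) * d) - f ((a + b) / 2) ((c + d) / 2))
    (f (t * a + (1 - t) * b) ((1 - s) * c + s * d) - f ((a + b) / 2) ((c + d) / 2))
    (f ((1 - t) * a + t * b) (s * c + (1 - s) * d) - f ((a + b) / 2) ((c + d) / 2))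
    (f ((1 - t) * a + t * b) ((1 - s) * c + s * d) - f ((a + b) / 2) ((c + d) / 2))
  linarith
end

section
/- Let a < b and c < d be real numbers, Δ = [a,b] × [c,d], let f : Δ → ℝ be (L₁, L₂)-Lipschitz on Δ with L₁, L₂ > 0, and define H : [0,1] × [0,1] → ℝ by H(t,s) = (1/((b-a)(d-c))) ∫_a^b ∫_c^d f(t·x + (1-t)·(a+b)/2, s·y + (1-s)·(c+d)/2) dy dx. Then for all t₁, t₂, s₁, s₂ ∈ [0,1], |H(t₂, s₂) − H(t₁, s₁)| ≤ (L₁·(b-a)/4)·|t₂ − t₁| + (L₂·(d-c)/4)·|s₂ − s₁|; in particular, H is Lipschitz on [0,1] × [0,1]. -/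
/-!
Replacing `x` by `t * x + (1 - t) * M` with `M` the midpoint moves it by `|t₂ - t₁| * |x - M|`
when `t` changes from `t₁` to `t₂`, so the Lipschitz bound on `f` holds pointwise under the
integral with weights `|x - M₁|` and `|y - M₂|`. Their means over `[a, b]` and `[c, d]` are
`(b - a) / 4` and `(d - c) / 4`. All integrands are integrable because the inner integral of a
function that is Lipschitz on the rectangle is again Lipschitz in the outer variable.
-/

open MeasureTheory Set intervalIntegral

def LipschitzOnRect (L₁ L₂ : ℝ) (f : ℝ → ℝ → ℝ) (s t : Set ℝ) : Prop :=
  ∀ x₁ ∈ s, ∀ x₂ ∈ s, ∀ y₁ ∈ t, ∀ y₂ ∈ t,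
    |f x₁ y₁ - f x₂ y₂| ≤ L₁ * |x₁ - x₂| + L₂ * |y₁ - y₂|

theorem abs_intervalIntegral_sub_le {μ : Measure ℝ} {a b : ℝ} {u v w : ℝ → ℝ} (hab : a ≤ b)
    (hu : IntervalIntegrable u μ a b) (hv : IntervalIntegrable v μ a b)
    (hw : IntervalIntegrable w μ a b) (h : ∀ x ∈ Icc a b, |u x - v x| ≤ w x) :
    |(∫ x in a..b, u x ∂μ) - ∫ x in a..b, v x ∂μ| ≤ ∫ x in a..b, w x ∂μ := by
  rw [← integral_sub hu hv, ← Real.norm_eq_abs]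
  exact norm_integral_le_of_norm_le hab
    (ae_of_all _ fun x hx => (Real.norm_eq_abs _).trans_le (h x (Ioc_subset_Icc_self hx))) hw

theorem integral_abs_sub_of_mem_Icc {a b m : ℝ} (hm : m ∈ Icc a b) :
    ∫ x in a..b, |x - m| = ((m - a) ^ 2 + (b - m) ^ 2) / 2 := by
  have hcont : Continuous fun x : ℝ => |x - m| := by fun_prop
  have left : ∫ x in a..m, |x - m| = ∫ x in a..m, (m - x) := by
    refine integral_congr fun x hx => ?_
    rw [uIcc_of_le hm.1] at hx
    simp only [abs_sub_comm x m, abs_of_nonneg (sub_nonneg.2 hx.2)]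
  have right : ∫ x in m..b, |x - m| = ∫ x in m..b, (x - m) := by
    refine integral_congr fun x hx => ?_
    rw [uIcc_of_le hm.2] at hx
    simp only [abs_of_nonneg (sub_nonneg.2 hx.1)]
  rw [← integral_add_adjacent_intervals (hcont.intervalIntegrable a m)
    (hcont.intervalIntegrable m b), left, right,
    integral_sub intervalIntegrable_const intervalIntegrable_id,
    integral_sub intervalIntegrable_id intervalIntegrable_const]
  simp only [intervalIntegral.integral_const, integral_id, smul_eq_mul]
  ring

theorem integral_abs_sub_midpoint {a b : ℝ} (hab : a ≤ b) :
    ∫ x in a..b, |x - (a + b) / 2| = (b - a) ^ 2 / 4 := by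
  rw [integral_abs_sub_of_mem_Icc ⟨by linarith, by linarith⟩]
  ring

theorem mul_add_one_sub_mul_mem_Icc {a b t x m : ℝ} (ht : t ∈ Icc (0 : ℝ) 1)
    (hx : x ∈ Icc a b) (hm : m ∈ Icc a b) : t * x + (1 - t) * m ∈ Icc a b :=
  convex_Icc a b hx hm ht.1 (sub_nonneg.2 ht.2) (by ring)

namespace LipschitzOnRect

variable {L₁ L₂ : ℝ} {f : ℝ → ℝ → ℝ}

section

variable {s t : Set ℝ}

theorem lipschitzOnWith_right (hf : LipschitzOnRect L₁ L₂ f s t) {x : ℝ} (hx : x ∈ s) :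
    LipschitzOnWith L₂.toNNReal (f x) t :=
  LipschitzOnWith.of_dist_le_mul fun y₁ hy₁ y₂ hy₂ => by
    have h := hf x hx x hx y₁ hy₁ y₂ hy₂
    rw [sub_self, abs_zero, mul_zero, zero_add] at h
    rw [Real.dist_eq, Real.dist_eq]
    exact h.trans (mul_le_mul_of_nonneg_right (Real.le_coe_toNNReal L₂) (abs_nonneg _))

theorem lipschitzOnWith_uncurry (hf : LipschitzOnRect L₁ L₂ f s t) (hL₁ : 0 ≤ L₁)
    (hL₂ : 0 ≤ L₂) : LipschitzOnWith (L₁ + L₂).toNNReal (Function.uncurry f) (s ×ˢ t) :=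
  LipschitzOnWith.of_dist_le_mul fun p hp q hq => by
    rw [Real.dist_eq, Real.coe_toNNReal _ (add_nonneg hL₁ hL₂), add_mul]
    have h₁ : |p.1 - q.1| ≤ dist p q := (Real.dist_eq _ _).symm.trans_le (le_max_left _ _)
    have h₂ : |p.2 - q.2| ≤ dist p q := (Real.dist_eq _ _).symm.trans_le (le_max_right _ _)
    calc |f p.1 p.2 - f q.1 q.2| ≤ L₁ * |p.1 - q.1| + L₂ * |p.2 - q.2| :=
          hf p.1 hp.1 q.1 hq.1 p.2 hp.2 q.2 hq.2
      _ ≤ L₁ * dist p q + L₂ * dist p q := by gcongr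

end

variable {a b c d : ℝ}

theorem intervalIntegrable_right (hf : LipschitzOnRect L₁ L₂ f (Icc a b) (Icc c d))
    (hcd : c ≤ d) {x : ℝ} (hx : x ∈ Icc a b) : IntervalIntegrable (f x) volume c d :=
  (hf.lipschitzOnWith_right hx).continuousOn.intervalIntegrable_of_Icc hcd

theorem lipschitzOnWith_integral_right (hf : LipschitzOnRect L₁ L₂ f (Icc a b) (Icc c d))
    (hcd : c ≤ d) :
    LipschitzOnWith (L₁ * (d - c)).toNNReal (fun x => ∫ y in c..d, f x y) (Icc a b) :=
  LipschitzOnWith.of_dist_le_mul fun x₁ hx₁ x₂ hx₂ => by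
    rw [Real.dist_eq, Real.dist_eq]
    calc |(∫ y in c..d, f x₁ y) - ∫ y in c..d, f x₂ y| ≤ ∫ _ in c..d, L₁ * |x₁ - x₂| :=
          abs_intervalIntegral_sub_le hcd (hf.intervalIntegrable_right hcd hx₁)
            (hf.intervalIntegrable_right hcd hx₂) intervalIntegrable_const fun y hy => by
              simpa using hf x₁ hx₁ x₂ hx₂ y hy y hy
      _ = L₁ * (d - c) * |x₁ - x₂| := by
          rw [intervalIntegral.integral_const, smul_eq_mul]
          ring
      _ ≤ (L₁ * (d - c)).toNNReal * |x₁ - x₂| := by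
          gcongr
          exact Real.le_coe_toNNReal _

theorem intervalIntegrable_integral_right (hf : LipschitzOnRect L₁ L₂ f (Icc a b) (Icc c d))
    (hab : a ≤ b) (hcd : c ≤ d) :
    IntervalIntegrable (fun x => ∫ y in c..d, f x y) volume a b :=
  (hf.lipschitzOnWith_integral_right hcd).continuousOn.intervalIntegrable_of_Icc hab


theorem abs_integral_integral_sub_le {K₁ K₂ : ℝ} {g : ℝ → ℝ → ℝ}
    (hf : LipschitzOnRect L₁ L₂ f (Icc a b) (Icc c d))
    (hg : LipschitzOnRect K₁ K₂ g (Icc a b) (Icc c d)) (hab : a ≤ b) (hcd : c ≤ d)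
    {u v : ℝ → ℝ} (hu : IntervalIntegrable u volume a b) (hv : IntervalIntegrable v volume c d)
    (h : ∀ x ∈ Icc a b, ∀ y ∈ Icc c d, |f x y - g x y| ≤ u x + v y) :
    |(∫ x in a..b, ∫ y in c..d, f x y) - ∫ x in a..b, ∫ y in c..d, g x y| ≤
      (d - c) * (∫ x in a..b, u x) + (b - a) * ∫ y in c..d, v y := by
  have inner : ∀ x ∈ Icc a b, |(∫ y in c..d, f x y) - ∫ y in c..d, g x y| ≤
      (d - c) * u x + ∫ y in c..d, v y := fun x hx => by
    calc |(∫ y in c..d, f x y) - ∫ y in c..d, g x y| ≤ ∫ y in c..d, (u x + v y) :=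
          abs_intervalIntegral_sub_le hcd (hf.intervalIntegrable_right hcd hx)
            (hg.intervalIntegrable_right hcd hx) (intervalIntegrable_const.add hv) (h x hx)
      _ = (d - c) * u x + ∫ y in c..d, v y := by
          rw [integral_add intervalIntegrable_const hv, intervalIntegral.integral_const,
            smul_eq_mul]
  calc _ ≤ ∫ x in a..b, ((d - c) * u x + ∫ y in c..d, v y) :=
        abs_intervalIntegral_sub_le hab (hf.intervalIntegrable_integral_right hab hcd)
          (hg.intervalIntegrable_integral_right hab hcd)
          ((hu.const_mul _).add intervalIntegrable_const) inner
    _ = (d - c) * (∫ x in a..b, u x) + (b - a) * ∫ y in c..d, v y := by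
        rw [integral_add (hu.const_mul _) intervalIntegrable_const, intervalIntegral.integral_const_mul,
          intervalIntegral.integral_const, smul_eq_mul]

variable {m n : ℝ}

theorem comp_homothety (hf : LipschitzOnRect L₁ L₂ f (Icc a b) (Icc c d)) (hm : m ∈ Icc a b)
    (hn : n ∈ Icc c d) {t s : ℝ} (ht : t ∈ Icc (0 : ℝ) 1) (hs : s ∈ Icc (0 : ℝ) 1) :
    LipschitzOnRect (L₁ * t) (L₂ * s) (fun x y => f (t * x + (1 - t) * m) (s * y + (1 - s) * n))
      (Icc a b) (Icc c d) := fun x₁ hx₁ x₂ hx₂ y₁ hy₁ y₂ hy₂ => by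
  have h := hf _ (mul_add_one_sub_mul_mem_Icc ht hx₁ hm) _ (mul_add_one_sub_mul_mem_Icc ht hx₂ hm)
    _ (mul_add_one_sub_mul_mem_Icc hs hy₁ hn) _ (mul_add_one_sub_mul_mem_Icc hs hy₂ hn)
  rwa [show t * x₁ + (1 - t) * m - (t * x₂ + (1 - t) * m) = t * (x₁ - x₂) by ring,
    show s * y₁ + (1 - s) * n - (s * y₂ + (1 - s) * n) = s * (y₁ - y₂) by ring,
    abs_mul, abs_mul, abs_of_nonneg ht.1, abs_of_nonneg hs.1, ← mul_assoc, ← mul_assoc] at h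

theorem abs_comp_homothety_sub_le (hf : LipschitzOnRect L₁ L₂ f (Icc a b) (Icc c d))
    (hm : m ∈ Icc a b) (hn : n ∈ Icc c d) {t₁ t₂ s₁ s₂ x y : ℝ} (ht₁ : t₁ ∈ Icc (0 : ℝ) 1)
    (ht₂ : t₂ ∈ Icc (0 : ℝ) 1) (hs₁ : s₁ ∈ Icc (0 : ℝ) 1) (hs₂ : s₂ ∈ Icc (0 : ℝ) 1)
    (hx : x ∈ Icc a b) (hy : y ∈ Icc c d) :
    |f (t₁ * x + (1 - t₁) * m) (s₁ * y + (1 - s₁) * n) -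
        f (t₂ * x + (1 - t₂) * m) (s₂ * y + (1 - s₂) * n)| ≤
      L₁ * |t₁ - t₂| * |x - m| + L₂ * |s₁ - s₂| * |y - n| := by
  have h := hf _ (mul_add_one_sub_mul_mem_Icc ht₁ hx hm) _ (mul_add_one_sub_mul_mem_Icc ht₂ hx hm)
    _ (mul_add_one_sub_mul_mem_Icc hs₁ hy hn) _ (mul_add_one_sub_mul_mem_Icc hs₂ hy hn)
  rwa [show t₁ * x + (1 - t₁) * m - (t₂ * x + (1 - t₂) * m) = (t₁ - t₂) * (x - m) by ring,
    show s₁ * y + (1 - s₁) * n - (s₂ * y + (1 - s₂) * n) = (s₁ - s₂) * (y - n) by ring,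
    abs_mul, abs_mul, ← mul_assoc, ← mul_assoc] at h

end LipschitzOnRect

noncomputable def homotheticMean (f : ℝ → ℝ → ℝ) (a b c d t s : ℝ) : ℝ :=
  1 / ((b - a) * (d - c)) * ∫ x in a..b, ∫ y in c..d,
    f (t * x + (1 - t) * ((a + b) / 2)) (s * y + (1 - s) * ((c + d) / 2))

theorem LipschitzOnRect.homotheticMean {L₁ L₂ a b c d : ℝ} {f : ℝ → ℝ → ℝ}
    (hf : LipschitzOnRect L₁ L₂ f (Icc a b) (Icc c d)) (hab : a < b) (hcd : c < d) :
    LipschitzOnRect (L₁ * (b - a) / 4) (L₂ * (d - c) / 4) (homotheticMean f a b c d)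
      (Icc 0 1) (Icc 0 1) := by
  intro t₁ ht₁ t₂ ht₂ s₁ hs₁ s₂ hs₂
  have hM₁ : (a + b) / 2 ∈ Icc a b := ⟨by linarith, by linarith⟩
  have hM₂ : (c + d) / 2 ∈ Icc c d := ⟨by linarith, by linarith⟩
  have key := abs_integral_integral_sub_le (hf.comp_homothety hM₁ hM₂ ht₁ hs₁)
    (hf.comp_homothety hM₁ hM₂ ht₂ hs₂) hab.le hcd.le
    ((by fun_prop : Continuous fun x => L₁ * |t₁ - t₂| * |x - (a + b) / 2|).intervalIntegrable _ _)
    ((by fun_prop : Continuous fun y => L₂ * |s₁ - s₂| * |y - (c + d) / 2|).intervalIntegrable _ _)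
    fun x hx y hy => hf.abs_comp_homothety_sub_le hM₁ hM₂ ht₁ ht₂ hs₁ hs₂ hx hy
  rw [intervalIntegral.integral_const_mul, integral_abs_sub_midpoint hab.le,
    intervalIntegral.integral_const_mul, integral_abs_sub_midpoint hcd.le] at key
  have hba : 0 < b - a := sub_pos.2 hab
  have hdc : 0 < d - c := sub_pos.2 hcd
  rw [_root_.homotheticMean, _root_.homotheticMean, ← mul_sub, abs_mul,
    abs_of_pos (by positivity)]
  calc _ ≤ 1 / ((b - a) * (d - c)) * ((d - c) * (L₁ * |t₁ - t₂| * ((b - a) ^ 2 / 4)) +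
          (b - a) * (L₂ * |s₁ - s₂| * ((d - c) ^ 2 / 4))) := by gcongr
    _ = _ := by field_simp

/-- Theorem 7(i): the mapping
`H(t,s) = (1/((b-a)(d-c))) ∫_a^b ∫_c^d f(tx+(1-t)(a+b)/2, sy+(1-s)(c+d)/2) dy dx`
associated with an `(L₁, L₂)`-Lipschitz function `f` on `[a,b] × [c,d]` satisfies
`|H(t₂,s₂) − H(t₁,s₁)| ≤ (L₁(b-a)/4)|t₂-t₁| + (L₂(d-c)/4)|s₂-s₁|` on
`[0,1] × [0,1]`; in particular `H` is Lipschitz on `[0,1] × [0,1]`. -/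
theorem mapping_H_lipschitz
    (a b c d L₁ L₂ : ℝ) (hab : a < b) (hcd : c < d) (hL₁ : 0 < L₁) (hL₂ : 0 < L₂)
    (f : ℝ → ℝ → ℝ)
    (hf : ∀ t₁ ∈ Icc a b, ∀ t₂ ∈ Icc a b, ∀ s₁ ∈ Icc c d, ∀ s₂ ∈ Icc c d,
      |f t₁ s₁ - f t₂ s₂| ≤ L₁ * |t₁ - t₂| + L₂ * |s₁ - s₂|)
    (H : ℝ → ℝ → ℝ)
    (hH : ∀ t s, H t s = (1 / ((b - a) * (d - c))) *
      ∫ x in a..b, ∫ y in c..d,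
        f (t * x + (1 - t) * ((a + b) / 2)) (s * y + (1 - s) * ((c + d) / 2))) :
    (∀ t₁ ∈ Icc (0:ℝ) 1, ∀ t₂ ∈ Icc (0:ℝ) 1, ∀ s₁ ∈ Icc (0:ℝ) 1, ∀ s₂ ∈ Icc (0:ℝ) 1,
      |H t₂ s₂ - H t₁ s₁| ≤
        (L₁ * (b - a) / 4) * |t₂ - t₁| + (L₂ * (d - c) / 4) * |s₂ - s₁|) ∧
    ∃ K : NNReal, LipschitzOnWith K (fun p : ℝ × ℝ => H p.1 p.2)
      (Icc (0:ℝ) 1 ×ˢ Icc (0:ℝ) 1) := by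
  obtain rfl : H = homotheticMean f a b c d := funext₂ hH
  have hLip : LipschitzOnRect _ _ _ _ _ := LipschitzOnRect.homotheticMean hf hab hcd
  have hba : 0 < b - a := sub_pos.2 hab
  have hdc : 0 < d - c := sub_pos.2 hcd
  exact ⟨fun t₁ ht₁ t₂ ht₂ s₁ hs₁ s₂ hs₂ => hLip t₂ ht₂ t₁ ht₁ s₂ hs₂ s₁ hs₁,
    _, hLip.lipschitzOnWith_uncurry (by positivity) (by positivity)⟩
end

section
/- Let a < b and c < d be real numbers, Δ = [a,b] × [c,d], and let f : Δ → ℝ be (L₁, L₂)-Lipschitz on Δ with L₁, L₂ > 0. For t, s ∈ (0,1], set n₁ = a·t + (1-t)·(a+b)/2, n₂ = b·t + (1-t)·(a+b)/2, m₁ = c·s + (1-s)·(c+d)/2, m₂ = d·s + (1-s)·(c+d)/2. Then |(f(n₁,m₁) + f(n₁,m₂) + f(n₂,m₁) + f(n₂,m₂))/4 − (1/((n₂-n₁)(m₂-m₁))) ∫_{n₁}^{n₂} ∫_{m₁}^{m₂} f(u,w) dw du| ≤ (1/12)·(4·L₁·(b-a)·t + 4·L₂·(d-c)·s), i.e.,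 the left-hand side is at most (L₁·(b-a)·t + L₂·(d-c)·s)/3. -/
/-!
On each half of `[α, β]` a `K`-Lipschitz `g` stays within `K · |u - endpoint|` of its value at
the nearer endpoint, which gives the one-dimensional trapezoid estimate `K (β - α)² / 4`.
On a rectangle, apply it in `w` to `f α ·` and `f β ·`, and in `u` to `u ↦ ∫ w, f u w`, which
is `K₁ (δ - γ)`-Lipschitz; after dividing by the area the errors add up to
`(K₁ (β - α) + K₂ (δ - γ)) / 4`. The subrectangle `[n₁, n₂] × [m₁, m₂]` has sides `t (b - a)`
and `s (d - c)`, and `1 / 4 ≤ 1 / 3`.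
-/

open MeasureTheory Set intervalIntegral
open scoped NNReal

namespace LipschitzOnWith

variable {g : ℝ → ℝ} {K : ℝ≥0} {α β : ℝ}

theorem abs_sub_integral_le_left (hg : LipschitzOnWith K g (Icc α β)) (hαβ : α ≤ β) :
    |(β - α) * g α - ∫ u in α..β, g u| ≤ K * (β - α) ^ 2 / 2 := by
  have hint : IntervalIntegrable g volume α β := hg.continuousOn.intervalIntegrable_of_Icc hαβ
  calc |(β - α) * g α - ∫ u in α..β, g u| = |∫ u in α..β, (g α - g u)| := by
        rw [integral_sub intervalIntegrable_const hint, intervalIntegral.integral_const,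
          smul_eq_mul]
    _ ≤ ∫ u in α..β, |g α - g u| := abs_integral_le_integral_abs hαβ
    _ ≤ ∫ u in α..β, K * (u - α) := by
        refine integral_mono_on hαβ (intervalIntegrable_const.sub hint).abs
          ((intervalIntegrable_id.sub intervalIntegrable_const).const_mul _) fun u hu => ?_
        simpa [Real.dist_eq, abs_sub_comm α u, abs_of_nonneg (sub_nonneg.2 hu.1)] using
          hg.dist_le_mul α (left_mem_Icc.2 hαβ) u hu
    _ = K * (β - α) ^ 2 / 2 := by
        rw [intervalIntegral.integral_const_mul, integral_comp_sub_right (fun u => u), integral_id]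
        ring

theorem abs_sub_integral_le_right (hg : LipschitzOnWith K g (Icc α β)) (hαβ : α ≤ β) :
    |(β - α) * g β - ∫ u in α..β, g u| ≤ K * (β - α) ^ 2 / 2 := by
  have hreflect : LipschitzOnWith K (fun u => g (α + β - u)) (Icc α β) := by
    refine of_dist_le_mul fun x hx y hy => ?_
    have := hg.dist_le_mul (α + β - x) ⟨by linarith [hx.2], by linarith [hx.1]⟩
      (α + β - y) ⟨by linarith [hy.2], by linarith [hy.1]⟩
    rwa [Real.dist_eq (α + β - x), show α + β - x - (α + β - y) = -(x - y) by ring, abs_neg,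
      ← Real.dist_eq] at this
  simpa [integral_comp_sub_left] using hreflect.abs_sub_integral_le_left hαβ

theorem abs_trapezoid_sub_integral_le (hg : LipschitzOnWith K g (Icc α β)) (hαβ : α ≤ β) :
    |(g α + g β) / 2 * (β - α) - ∫ u in α..β, g u| ≤ K * (β - α) ^ 2 / 4 := by
  set μ := (α + β) / 2 with hμ
  have hαμ : α ≤ μ := by linarith
  have hμβ : μ ≤ β := by linarith
  have hint : IntervalIntegrable g volume α β := hg.continuousOn.intervalIntegrable_of_Icc hαβ
  have hsplit := integral_add_adjacent_intervals
    (hint.mono_set (by rw [uIcc_of_le hαμ, uIcc_of_le hαβ]; exact Icc_subset_Icc_right hμβ))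
    (hint.mono_set (by rw [uIcc_of_le hμβ, uIcc_of_le hαβ]; exact Icc_subset_Icc_left hαμ))
  have hleft := (hg.mono (Icc_subset_Icc_right hμβ)).abs_sub_integral_le_left hαμ
  have hright := (hg.mono (Icc_subset_Icc_left hαμ)).abs_sub_integral_le_right hμβ
  calc |(g α + g β) / 2 * (β - α) - ∫ u in α..β, g u|
      = |((μ - α) * g α - ∫ u in α..μ, g u) + ((β - μ) * g β - ∫ u in μ..β, g u)| := by
        rw [← hsplit, hμ]; ring_nf
    _ ≤ K * (μ - α) ^ 2 / 2 + K * (β - μ) ^ 2 / 2 :=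
        (abs_add_le _ _).trans (add_le_add hleft hright)
    _ = K * (β - α) ^ 2 / 4 := by rw [hμ]; ring

end LipschitzOnWith

theorem lipschitzOnWith_parametric_intervalIntegral {X E : Type*} [PseudoMetricSpace X]
    [NormedAddCommGroup E] [NormedSpace ℝ E] {f : X → ℝ → E} {K : ℝ≥0} {s : Set X} {γ δ : ℝ}
    (hγδ : γ ≤ δ) (hf : ∀ w ∈ Icc γ δ, LipschitzOnWith K (f · w) s)
    (hint : ∀ x ∈ s, IntervalIntegrable (f x) volume γ δ) :
    LipschitzOnWith (K * Real.toNNReal (δ - γ)) (fun x => ∫ w in γ..δ, f x w) s := by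
  refine LipschitzOnWith.of_dist_le_mul fun x hx y hy => ?_
  rw [dist_eq_norm, ← integral_sub (hint x hx) (hint y hy), NNReal.coe_mul,
    Real.coe_toNNReal _ (sub_nonneg.2 hγδ)]
  calc ‖∫ w in γ..δ, (f x w - f y w)‖ ≤ K * dist x y * |δ - γ| :=
        norm_integral_le_of_norm_le_const fun w hw => by
          rw [← dist_eq_norm]
          exact (hf w (Ioc_subset_Icc_self (uIoc_of_le hγδ ▸ hw))).dist_le_mul x hx y hy
    _ = K * (δ - γ) * dist x y := by rw [abs_of_nonneg (sub_nonneg.2 hγδ)]; ring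

section Rectangle

variable {f : ℝ → ℝ → ℝ} {K₁ K₂ : ℝ≥0} {α β γ δ : ℝ}

theorem abs_rectangle_trapezoid_sub_integral_le (hαβ : α ≤ β) (hγδ : γ ≤ δ)
    (h₁ : ∀ w ∈ Icc γ δ, LipschitzOnWith K₁ (f · w) (Icc α β))
    (h₂ : ∀ u ∈ Icc α β, LipschitzOnWith K₂ (f u) (Icc γ δ)) :
    |(f α γ + f α δ + f β γ + f β δ) / 4 * ((β - α) * (δ - γ)) -
        ∫ u in α..β, ∫ w in γ..δ, f u w| ≤
      (β - α) * (δ - γ) * (K₁ * (β - α) + K₂ * (δ - γ)) / 4 := by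
  set G : ℝ → ℝ := fun u => ∫ w in γ..δ, f u w
  have hG : LipschitzOnWith (K₁ * Real.toNNReal (δ - γ)) G (Icc α β) :=
    lipschitzOnWith_parametric_intervalIntegral hγδ h₁ fun u hu =>
      (h₂ u hu).continuousOn.intervalIntegrable_of_Icc hγδ
  have hG_err := hG.abs_trapezoid_sub_integral_le hαβ
  have hα_err := (h₂ α (left_mem_Icc.2 hαβ)).abs_trapezoid_sub_integral_le hγδ
  have hβ_err := (h₂ β (right_mem_Icc.2 hαβ)).abs_trapezoid_sub_integral_le hγδ
  rw [NNReal.coe_mul, Real.coe_toNNReal _ (sub_nonneg.2 hγδ)] at hG_err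
  have hhalf : 0 ≤ (β - α) / 2 := by linarith
  calc _ = |(β - α) / 2 * (((f α γ + f α δ) / 2 * (δ - γ) - G α) +
          ((f β γ + f β δ) / 2 * (δ - γ) - G β)) +
        ((G α + G β) / 2 * (β - α) - ∫ u in α..β, G u)| := by ring_nf
    _ ≤ (β - α) / 2 * (K₂ * (δ - γ) ^ 2 / 4 + K₂ * (δ - γ) ^ 2 / 4) +
        K₁ * (δ - γ) * (β - α) ^ 2 / 4 := by
      refine (abs_add_le _ _).trans (add_le_add ?_ hG_err)
      rw [abs_mul, abs_of_nonneg hhalf]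
      exact mul_le_mul_of_nonneg_left ((abs_add_le _ _).trans (add_le_add hα_err hβ_err)) hhalf
    _ = (β - α) * (δ - γ) * (K₁ * (β - α) + K₂ * (δ - γ)) / 4 := by ring

theorem abs_rectangle_trapezoid_sub_average_le (hαβ : α < β) (hγδ : γ < δ)
    (h₁ : ∀ w ∈ Icc γ δ, LipschitzOnWith K₁ (f · w) (Icc α β))
    (h₂ : ∀ u ∈ Icc α β, LipschitzOnWith K₂ (f u) (Icc γ δ)) :
    |(f α γ + f α δ + f β γ + f β δ) / 4 -
        1 / ((β - α) * (δ - γ)) * ∫ u in α..β, ∫ w in γ..δ, f u w| ≤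
      (K₁ * (β - α) + K₂ * (δ - γ)) / 4 := by
  have h := abs_rectangle_trapezoid_sub_integral_le hαβ.le hγδ.le h₁ h₂
  set A := (β - α) * (δ - γ)
  have hA : 0 < A := mul_pos (sub_pos.2 hαβ) (sub_pos.2 hγδ)
  rw [one_div_mul_eq_div, sub_div' hA.ne', abs_div, abs_of_pos hA, div_le_iff₀ hA]
  linarith

end Rectangle

/-- Theorem 8, inequality (3.3) (with `M₁ = 4L₁`, `M₂ = 4L₂`, and
`n₂ - n₁ = t(b-a)`, `m₂ - m₁ = s(d-c)`): for an `(L₁, L₂)`-Lipschitz function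
`f` on `[a,b] × [c,d]` and `t, s ∈ (0,1]`, with
`n₁ = at+(1-t)(a+b)/2`, `n₂ = bt+(1-t)(a+b)/2`, `m₁ = cs+(1-s)(c+d)/2`,
`m₂ = ds+(1-s)(c+d)/2`, one has
`|(f(n₁,m₁)+f(n₁,m₂)+f(n₂,m₁)+f(n₂,m₂))/4
  − (1/((n₂-n₁)(m₂-m₁))) ∫_{n₁}^{n₂} ∫_{m₁}^{m₂} f(u,w) dw du|
  ≤ (1/12)(4L₁(b-a)t + 4L₂(d-c)s)`. -/
theorem hadamard_lipschitz_subrectangle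
    (a b c d L₁ L₂ : ℝ) (hab : a < b) (hcd : c < d) (hL₁ : 0 < L₁) (hL₂ : 0 < L₂)
    (f : ℝ → ℝ → ℝ)
    (hf : ∀ t₁ ∈ Icc a b, ∀ t₂ ∈ Icc a b, ∀ s₁ ∈ Icc c d, ∀ s₂ ∈ Icc c d,
      |f t₁ s₁ - f t₂ s₂| ≤ L₁ * |t₁ - t₂| + L₂ * |s₁ - s₂|)
    (t s : ℝ) (ht : t ∈ Ioc (0:ℝ) 1) (hs : s ∈ Ioc (0:ℝ) 1)
    (n₁ n₂ m₁ m₂ : ℝ)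
    (hn₁ : n₁ = a * t + (1 - t) * ((a + b) / 2))
    (hn₂ : n₂ = b * t + (1 - t) * ((a + b) / 2))
    (hm₁ : m₁ = c * s + (1 - s) * ((c + d) / 2))
    (hm₂ : m₂ = d * s + (1 - s) * ((c + d) / 2)) :
    |(f n₁ m₁ + f n₁ m₂ + f n₂ m₁ + f n₂ m₂) / 4 -
        (1 / ((n₂ - n₁) * (m₂ - m₁))) * ∫ u in n₁..n₂, ∫ w in m₁..m₂, f u w| ≤
      (1 / 12) * (4 * L₁ * (b - a) * t + 4 * L₂ * (d - c) * s) := by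
  obtain ⟨ht₀, ht₁⟩ := ht
  obtain ⟨hs₀, hs₁⟩ := hs
  have hn : n₂ - n₁ = (b - a) * t := by rw [hn₁, hn₂]; ring
  have hm : m₂ - m₁ = (d - c) * s := by rw [hm₁, hm₂]; ring
  have hsubn : Icc n₁ n₂ ⊆ Icc a b := Icc_subset_Icc (by nlinarith) (by nlinarith)
  have hsubm : Icc m₁ m₂ ⊆ Icc c d := Icc_subset_Icc (by nlinarith) (by nlinarith)
  have h₁ : ∀ w ∈ Icc m₁ m₂, LipschitzOnWith L₁.toNNReal (f · w) (Icc n₁ n₂) :=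
    fun w hw => LipschitzOnWith.of_dist_le' fun x hx y hy => by
      simpa [Real.dist_eq] using hf x (hsubn hx) y (hsubn hy) w (hsubm hw) w (hsubm hw)
  have h₂ : ∀ u ∈ Icc n₁ n₂, LipschitzOnWith L₂.toNNReal (f u) (Icc m₁ m₂) :=
    fun u hu => LipschitzOnWith.of_dist_le' fun x hx y hy => by
      simpa [Real.dist_eq] using hf u (hsubn hu) u (hsubn hu) x (hsubm hx) y (hsubm hy)
  have key := abs_rectangle_trapezoid_sub_average_le (by nlinarith) (by nlinarith) h₁ h₂
  refine key.trans ?_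
  rw [Real.coe_toNNReal _ hL₁.le, Real.coe_toNNReal _ hL₂.le, hn, hm]
  linarith [mul_pos hL₁ (mul_pos (sub_pos.2 hab) ht₀), mul_pos hL₂ (mul_pos (sub_pos.2 hcd) hs₀)]
end
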